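/- Let G be an infinite group and A a nonempty subset of G. Then |A|·|B| = |G| for every right subfactor B of G relative to A and for every left subfactor B of G relative to A. Consequently |G| = |G:A|⁻·|A| = |G:A|⁺·|A| = |G:A|₋·|A| = |G:A|₊·|A| as cardinals. -/

import Mathlib

open Pointwise

/-!
A direct product `A·B` embeds `A × B` into `G`, so `|A|·|B| ≤ |G|`. Conversely, maximality of a
right subfactor `B` means that every `g ∉ B` makes `A·(B ∪ {g})` non-direct, i.e. `g ∈ A⁻¹AB`;
hence `G = A⁻¹AB` and `|G| ≤ |A|²·|B| ≤ (|A|·|B|)²`, which for infinite `G` forces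
`|G| ≤ |A|·|B|`. Left subfactors of `A` are the inverses of right subfactors of `A⁻¹`, and since
every subfactor has `|A|·|B| = |G|`, so do the infimum and (as multiplication by `|A|` commutes
with suprema of cardinals) the supremum of their cardinalities.
-/

/-- The product `A * B` is direct. -/
def IsDirectProd {G : Type*} [Group G] (A B : Set G) : Prop :=
  ∀ a₁ ∈ A, ∀ b₁ ∈ B, ∀ a₂ ∈ A, ∀ b₂ ∈ B, a₁ * b₁ = a₂ * b₂ → a₁ = a₂ ∧ b₁ = b₂

/-- `B` is a right subfactor of `G` relative to `A`. -/
def IsRightSubfactor {G : Type*} [Group G] (A B : Set G) : Prop :=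
  IsDirectProd A B ∧ ∀ B' : Set G, B ⊆ B' → IsDirectProd A B' → B' = B

/-- `B` is a left subfactor of `G` relative to `A`. -/
def IsLeftSubfactor {G : Type*} [Group G] (A B : Set G) : Prop :=
  IsDirectProd B A ∧ ∀ B' : Set G, B ⊆ B' → IsDirectProd B' A → B' = B

/-- The right upper subindex `|G:A|⁺`. -/
noncomputable def rUpperIndex {G : Type*} [Group G] (A : Set G) : Cardinal :=
  sSup {c | ∃ B : Set G, IsRightSubfactor A B ∧ c = Cardinal.mk ↥B}

/-- The right lower subindex `|G:A|⁻`. -/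
noncomputable def rLowerIndex {G : Type*} [Group G] (A : Set G) : Cardinal :=
  sInf {c | ∃ B : Set G, IsRightSubfactor A B ∧ c = Cardinal.mk ↥B}

/-- The left upper subindex `|G:A|₊`. -/
noncomputable def lUpperIndex {G : Type*} [Group G] (A : Set G) : Cardinal :=
  sSup {c | ∃ B : Set G, IsLeftSubfactor A B ∧ c = Cardinal.mk ↥B}

/-- The left lower subindex `|G:A|₋`. -/
noncomputable def lLowerIndex {G : Type*} [Group G] (A : Set G) : Cardinal :=
  sInf {c | ∃ B : Set G, IsLeftSubfactor A B ∧ c = Cardinal.mk ↥B}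

open Cardinal

theorem Cardinal.le_of_aleph0_le_of_le_mul_self {κ μ : Cardinal} (hκ : ℵ₀ ≤ κ) (h : κ ≤ μ * μ) :
    κ ≤ μ := by
  rcases lt_or_ge μ ℵ₀ with hμ | hμ
  · exact absurd (h.trans_lt (mul_lt_aleph0 hμ hμ)) hκ.not_gt
  · rwa [mul_eq_self hμ] at h

theorem Cardinal.sSup_mul_eq_of_forall_mul_eq {S : Set Cardinal} (hS : S.Nonempty)
    {a κ : Cardinal} (h : ∀ c ∈ S, c * a = κ) : sSup S * a = κ := by
  have : Nonempty S := hS.to_subtype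
  rw [sSup_eq_iSup', Cardinal.ciSup_mul]
  simp only [fun c : S => h c c.2, ciSup_const]

section

variable {G : Type*} [Group G] {A B : Set G}

theorem IsDirectProd.mk_mul_mk_le (h : IsDirectProd A B) : #A * #B ≤ #G := by
  rw [← lift_id #A, ← lift_id #B, ← mk_prod]
  refine mk_le_of_injective (f := fun p : A × B => (p.1 : G) * p.2) ?_
  rintro ⟨⟨a₁, ha₁⟩, ⟨b₁, hb₁⟩⟩ ⟨⟨a₂, ha₂⟩, ⟨b₂, hb₂⟩⟩ heq
  obtain ⟨rfl, rfl⟩ := h a₁ ha₁ b₁ hb₁ a₂ ha₂ b₂ hb₂ heq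
  rfl

theorem IsDirectProd.insert (h : IsDirectProd A B) {g : G} (hg : g ∉ A⁻¹ * A * B) :
    IsDirectProd A (insert g B) := by
  have hne : ∀ a₁ ∈ A, ∀ a₂ ∈ A, ∀ b ∈ B, a₁ * g ≠ a₂ * b := by
    rintro a₁ ha₁ a₂ ha₂ b hb heq
    exact hg ⟨a₁⁻¹ * a₂, Set.mul_mem_mul (Set.inv_mem_inv.2 ha₁) ha₂, b, hb,
      show a₁⁻¹ * a₂ * b = g by rw [mul_assoc]; exact inv_mul_eq_of_eq_mul heq.symm⟩
  rintro a₁ ha₁ b₁ hb₁ a₂ ha₂ b₂ hb₂ heq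
  rcases hb₁ with rfl | hb₁ <;> rcases hb₂ with rfl | hb₂
  · exact ⟨mul_right_cancel heq, rfl⟩
  · exact (hne a₁ ha₁ a₂ ha₂ b₂ hb₂ heq).elim
  · exact (hne a₂ ha₂ a₁ ha₁ b₁ hb₁ heq.symm).elim
  · exact h a₁ ha₁ b₁ hb₁ a₂ ha₂ b₂ hb₂ heq

theorem IsDirectProd.inv (h : IsDirectProd B A) : IsDirectProd A⁻¹ B⁻¹ := by
  intro a₁ ha₁ b₁ hb₁ a₂ ha₂ b₂ hb₂ heq
  have heq' : b₁⁻¹ * a₁⁻¹ = b₂⁻¹ * a₂⁻¹ := by rw [← mul_inv_rev, heq, mul_inv_rev]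
  obtain ⟨hb, ha⟩ := h _ hb₁ _ ha₁ _ hb₂ _ ha₂ heq'
  exact ⟨inv_injective ha, inv_injective hb⟩

theorem isDirectProd_inv_inv_iff : IsDirectProd A⁻¹ B⁻¹ ↔ IsDirectProd B A :=
  ⟨fun h => by simpa only [inv_inv] using h.inv, IsDirectProd.inv⟩

theorem IsRightSubfactor.inv_mul_mul_eq_univ (hA : A.Nonempty) (h : IsRightSubfactor A B) :
    A⁻¹ * A * B = Set.univ := by
  refine Set.eq_univ_of_forall fun g => by_contra fun hg => ?_
  have hgB : g ∈ B := h.2 _ (Set.subset_insert g B) (h.1.insert hg) ▸ Set.mem_insert g B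
  obtain ⟨a, ha⟩ := hA
  exact hg ⟨a⁻¹ * a, Set.mul_mem_mul (Set.inv_mem_inv.2 ha) ha, g, hgB, by group⟩

theorem IsRightSubfactor.mk_mul_mk [Infinite G] (hA : A.Nonempty) (h : IsRightSubfactor A B) :
    #A * #B = #G := by
  have hcover := h.inv_mul_mul_eq_univ hA
  have hB : #B ≠ 0 :=
    mk_ne_zero_iff.2 (hcover ▸ Set.univ_nonempty : (A⁻¹ * A * B).Nonempty).of_mul_right.to_subtype
  refine le_antisymm h.1.mk_mul_mk_le (le_of_aleph0_le_of_le_mul_self (aleph0_le_mk G) ?_)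
  calc #G = #(A⁻¹ * A * B) := by rw [hcover, mk_univ]
    _ ≤ #(A⁻¹ * A) * #B := mk_mul_le
    _ ≤ #A * #A * #B := by grw [mk_mul_le, mk_inv]
    _ = #A * (#A * #B) := mul_assoc _ _ _
    _ ≤ (#A * #B) * (#A * #B) := by gcongr; exact le_mul_right hB

theorem isLeftSubfactor_iff_isRightSubfactor_inv :
    IsLeftSubfactor A B ↔ IsRightSubfactor A⁻¹ B⁻¹ := by
  rw [IsLeftSubfactor, IsRightSubfactor, isDirectProd_inv_inv_iff, inv_surjective.forall]
  simp only [← Set.inv_subset, ← isDirectProd_inv_inv_iff (A := A), inv_inv, inv_eq_iff_eq_inv]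

theorem IsLeftSubfactor.mk_mul_mk [Infinite G] (hA : A.Nonempty) (h : IsLeftSubfactor A B) :
    #A * #B = #G := by
  simpa only [mk_inv] using
    (isLeftSubfactor_iff_isRightSubfactor_inv.1 h).mk_mul_mk hA.inv

theorem exists_isRightSubfactor (A : Set G) : ∃ B, IsRightSubfactor A B := by
  obtain ⟨M, hM⟩ := zorn_subset {B : Set G | IsDirectProd A B} fun c hc hchain => by
    refine ⟨⋃₀ c, ?_, fun s hs => Set.subset_sUnion_of_mem hs⟩
    rintro a₁ ha₁ b₁ ⟨s₁, hs₁, hb₁⟩ a₂ ha₂ b₂ ⟨s₂, hs₂, hb₂⟩ heq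
    rcases hchain.total hs₁ hs₂ with h | h
    · exact hc hs₂ a₁ ha₁ b₁ (h hb₁) a₂ ha₂ b₂ hb₂ heq
    · exact hc hs₁ a₁ ha₁ b₁ hb₁ a₂ ha₂ b₂ (h hb₂) heq
  exact ⟨M, hM.1, fun B' hsub hd => subset_antisymm (hM.2 hd hsub) hsub⟩

theorem nonempty_setOf_isRightSubfactor (A : Set G) :
    {c | ∃ B, IsRightSubfactor A B ∧ c = #B}.Nonempty :=
  let ⟨B, hB⟩ := exists_isRightSubfactor A
  ⟨#B, B, hB, rfl⟩

theorem setOf_isLeftSubfactor_mk_eq (A : Set G) :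
    {c | ∃ B, IsLeftSubfactor A B ∧ c = #B} = {c | ∃ B, IsRightSubfactor A⁻¹ B ∧ c = #B} := by
  ext c
  constructor
  · rintro ⟨B, hB, rfl⟩
    exact ⟨B⁻¹, isLeftSubfactor_iff_isRightSubfactor_inv.1 hB, (mk_inv B).symm⟩
  · rintro ⟨B, hB, rfl⟩
    exact ⟨B⁻¹, isLeftSubfactor_iff_isRightSubfactor_inv.2 (by rwa [inv_inv]), (mk_inv B).symm⟩

theorem lLowerIndex_eq_rLowerIndex_inv (A : Set G) : lLowerIndex A = rLowerIndex A⁻¹ :=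
  congrArg sInf (setOf_isLeftSubfactor_mk_eq A)

theorem lUpperIndex_eq_rUpperIndex_inv (A : Set G) : lUpperIndex A = rUpperIndex A⁻¹ :=
  congrArg sSup (setOf_isLeftSubfactor_mk_eq A)

section Infinite

variable [Infinite G]

theorem mul_mk_eq_of_mem_setOf_isRightSubfactor (hA : A.Nonempty) :
    ∀ c ∈ {c | ∃ B, IsRightSubfactor A B ∧ c = #B}, c * #A = #G := by
  rintro c ⟨B, hB, rfl⟩
  rw [mul_comm, hB.mk_mul_mk hA]

theorem rLowerIndex_mul_mk (hA : A.Nonempty) : rLowerIndex A * #A = #G :=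
  mul_mk_eq_of_mem_setOf_isRightSubfactor hA _ (csInf_mem (nonempty_setOf_isRightSubfactor A))

theorem rUpperIndex_mul_mk (hA : A.Nonempty) : rUpperIndex A * #A = #G :=
  sSup_mul_eq_of_forall_mul_eq (nonempty_setOf_isRightSubfactor A)
    (mul_mk_eq_of_mem_setOf_isRightSubfactor hA)

end Infinite

end

theorem stmt6 {G : Type*} [Group G] [Infinite G] (A : Set G) (hA : A.Nonempty) :
    (∀ B : Set G, IsRightSubfactor A B → Cardinal.mk ↥A * Cardinal.mk ↥B = Cardinal.mk G) ∧
    (∀ B : Set G, IsLeftSubfactor A B → Cardinal.mk ↥A * Cardinal.mk ↥B = Cardinal.mk G) ∧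
    Cardinal.mk G = rLowerIndex A * Cardinal.mk ↥A ∧
    Cardinal.mk G = rUpperIndex A * Cardinal.mk ↥A ∧
    Cardinal.mk G = lLowerIndex A * Cardinal.mk ↥A ∧
    Cardinal.mk G = lUpperIndex A * Cardinal.mk ↥A := by
  refine ⟨fun _ => IsRightSubfactor.mk_mul_mk hA, fun _ => IsLeftSubfactor.mk_mul_mk hA,
    (rLowerIndex_mul_mk hA).symm, (rUpperIndex_mul_mk hA).symm, ?_, ?_⟩
  · rw [lLowerIndex_eq_rLowerIndex_inv, ← mk_inv A, rLowerIndex_mul_mk hA.inv]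
  · rw [lUpperIndex_eq_rUpperIndex_inv, ← mk_inv A, rUpperIndex_mul_mk hA.inv]
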